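/- arXiv:2211.16180 — 4 statements merged into one kernel-verified Lean document; each statement's English description precedes it below -/
import Mathlib

section
/- Let K be a relatively closed subset of an open set Ω ⊆ ℝ^N, let x₀ ∈ K and r₀ > 0 be such that B(x₀,r₀) ⊆ Ω. Let ε₀ ∈ [0,1/2], assume that β_K(x₀,r₀) ≤ ε₀ and that K separates in B(x₀,r₀). Then for all x ∈ K ∩ B(x₀,r₀) and all r > 0 such that B(x,r) ⊆ B(x₀,r₀) and r ≥ 4 ε₀ r₀, one has β_K(x,r) ≤ 1/2 and K separates in B(x,r). -/
open Metric MeasureTheory Set Filter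
open scoped RealInnerProductSpace ENNReal NNReal Topology

noncomputable section

abbrev Euc (N : ℕ) := EuclideanSpace ℝ (Fin N)

variable {N : ℕ}

/-- Affine hyperplane through `x` with normal `ν`. -/
def hplane (x ν : Euc N) : Set (Euc N) := {y | (inner ℝ (y - x) ν : ℝ) = 0}

/-- Bilateral flatness `β_K(x,r)`. -/
def flatness (K : Set (Euc N)) (x : Euc N) (r : ℝ) : ℝ :=
  r⁻¹ * ⨅ ν : {ν : Euc N // ‖ν‖ = 1},
    max (⨆ y : ↥(K ∩ ball x r), infDist (y : Euc N) (hplane x ν.1))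
        (⨆ y : ↥(hplane x ν.1 ∩ ball x r), infDist (y : Euc N) K)

/-- `K` is relatively closed in `Ω`. -/
def RelClosedIn (K Ω : Set (Euc N)) : Prop := K ⊆ Ω ∧ closure K ∩ Ω ⊆ K

/-- Connected component of `B(x₀,r₀) \ K` containing `x₀ + (3/4) r₀ ν`. -/
def posCompo (K : Set (Euc N)) (x₀ : Euc N) (r₀ : ℝ) (ν : Euc N) : Set (Euc N) :=
  connectedComponentIn (ball x₀ r₀ \ K) (x₀ + (3 / 4 * r₀) • ν)

/-- Connected component of `B(x₀,r₀) \ K` containing `x₀ - (3/4) r₀ ν`. -/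
def negCompo (K : Set (Euc N)) (x₀ : Euc N) (r₀ : ℝ) (ν : Euc N) : Set (Euc N) :=
  connectedComponentIn (ball x₀ r₀ \ K) (x₀ - (3 / 4 * r₀) • ν)

/-- `K` separates in `B(x₀,r₀)` with respect to the hyperplane through `x₀` of unit normal `ν`. -/
def SeparatesWith (K : Set (Euc N)) (x₀ : Euc N) (r₀ : ℝ) (ν : Euc N) : Prop :=
  ‖ν‖ = 1 ∧
  (∀ y ∈ K ∩ ball x₀ r₀, infDist y (hplane x₀ ν) ≤ r₀ / 2) ∧
  ball (x₀ + (3 / 4 * r₀) • ν) (r₀ / 4) ⊆ posCompo K x₀ r₀ ν ∧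
  ball (x₀ - (3 / 4 * r₀) • ν) (r₀ / 4) ⊆ negCompo K x₀ r₀ ν ∧
  posCompo K x₀ r₀ ν ≠ negCompo K x₀ r₀ ν

/-- `K` separates in `B(x₀,r₀)`. -/
def Separates (K : Set (Euc N)) (x₀ : Euc N) (r₀ : ℝ) : Prop := ∃ ν, SeparatesWith K x₀ r₀ ν

/-- The symmetrized gradient `e(u) = (Du + Duᵀ)/2`. -/
def symGrad (u : Euc N → Euc N) (x : Euc N) (i j : Fin N) : ℝ :=
  (fderiv ℝ u x (EuclideanSpace.single j 1) i + fderiv ℝ u x (EuclideanSpace.single i 1) j) / 2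

/-- `|e(u)|²`. -/
def eDensity (u : Euc N → Euc N) (x : Euc N) : ℝ := ∑ i, ∑ j, (symGrad u x i j) ^ 2

/-- Elastic energy `∫_S |e(u)|² dx`. -/
def energy (u : Euc N → Euc N) (S : Set (Euc N)) : ℝ := ∫ x in S, eDensity u x

/-- Admissible pair `(u,K)` in `Ω`. -/
def Admissible (Ω : Set (Euc N)) (u : Euc N → Euc N) (K : Set (Euc N)) : Prop :=
  RelClosedIn K Ω ∧ DifferentiableOn ℝ u (Ω \ K) ∧ LocallyIntegrableOn (eDensity u) (Ω \ K)

/-- `K` is coral. -/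
def Coral (K : Set (Euc N)) : Prop := ∀ x ∈ K, ∀ r > 0, 0 < μH[(N : ℝ) - 1] (K ∩ ball x r)

/-- `(v,L)` is a competitor of `(u,K)` in `B(x,r)`. -/
def Competitor (Ω : Set (Euc N)) (u : Euc N → Euc N) (K : Set (Euc N)) (x : Euc N) (r : ℝ)
    (v : Euc N → Euc N) (L : Set (Euc N)) : Prop :=
  Admissible Ω v L ∧ L \ ball x r = K \ ball x r ∧
  ∀ᵐ y ∂(volume : Measure (Euc N)), y ∈ Ω \ (K ∪ ball x r) → v y = u y

/-- `(u,K)` is a Griffith almost-minimizer with gauge `h` in `Ω`. -/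
def GriffithAM (Ω : Set (Euc N)) (h : ℝ → ℝ) (u : Euc N → Euc N) (K : Set (Euc N)) : Prop :=
  Admissible Ω u K ∧ Coral K ∧
  ∀ x r, 0 < r → closure (ball x r) ⊆ Ω →
    ∀ v L, Competitor Ω u K x r v L →
      ENNReal.ofReal (energy u (ball x r \ K)) + μH[(N : ℝ) - 1] (K ∩ ball x r) ≤
      ENNReal.ofReal (energy v (ball x r \ L)) + μH[(N : ℝ) - 1] (L ∩ ball x r) +
        ENNReal.ofReal (h r * r ^ (N - 1))

/-- Normalized energy `ω_u(x,r)`. -/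
def nenergy (u : Euc N → Euc N) (K : Set (Euc N)) (x : Euc N) (r : ℝ) : ℝ :=
  energy u (ball x r \ K) / r ^ (N - 1)

/-- A deformation of `E` in the ball `B`, inside the ambient open set `Ω`. -/
def IsDeformation (Ω E B : Set (Euc N)) (f : Euc N → Euc N) : Prop :=
  (∃ L : ℝ≥0, LipschitzOnWith L f E) ∧ f '' E ⊆ Ω ∧ f '' (E ∩ B) ⊆ B ∧
  IsCompact (closure {x | x ∈ E ∧ f x ≠ x}) ∧ closure {x | x ∈ E ∧ f x ≠ x} ⊆ B

/-- `F` is a topological competitor of `E` in the ball `B`. -/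
def TopCompetitor (Ω E B F : Set (Euc N)) : Prop :=
  ∃ f, IsDeformation Ω E B f ∧ F = f '' E

/-- `E` is an almost-minimal set in `V` with gauge `g`. -/
def AlmostMinimalSet (V : Set (Euc N)) (g : ℝ → ℝ≥0∞) (E : Set (Euc N)) : Prop :=
  RelClosedIn E V ∧ (∀ x ∈ V, ∃ r > 0, μH[(N : ℝ) - 1] (E ∩ ball x r) < ⊤) ∧
  ∀ x ∈ E, ∀ r, 0 < r → ball x r ⊆ V →
    ∀ f : Euc N → Euc N, IsDeformation V E (ball x r) f →
      μH[(N : ℝ) - 1] (E ∩ ball x r) ≤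
        μH[(N : ℝ) - 1] (f '' (E ∩ ball x r)) + g r * ENNReal.ofReal (r ^ (N - 1))

/-- `E` is a minimal set in `V`. -/
def MinimalSet (V E : Set (Euc N)) : Prop := AlmostMinimalSet V (fun _ => 0) E

/-- Hypothesis `H(ε₀, x₀, r₀)`. -/
def HypH (Ω K : Set (Euc N)) (ε₀ : ℝ) (x₀ : Euc N) (r₀ : ℝ) : Prop :=
  ball x₀ r₀ ⊆ Ω ∧ Separates K x₀ r₀ ∧ flatness K x₀ r₀ ≤ ε₀

/-- Geometric function with parameters `(ρ, τ)`. -/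
def GeomFn (K : Set (Euc N)) (x₀ : Euc N) (r₀ ρ τ : ℝ) (δ : Euc N → ℝ) : Prop :=
  LipschitzOnWith 100 δ (K ∩ closure (ball x₀ ρ)) ∧
  (∀ x ∈ K ∩ closure (ball x₀ ρ), δ x ∈ Icc 0 (r₀ / 4)) ∧
  ∀ x ∈ K ∩ closure (ball x₀ ρ), ∀ r ∈ Ioc (δ x) (r₀ / 4), flatness K x r ≤ τ

/-- The stopping distance `d(x)` of the bad-mass construction. -/
def stopR (τ : ℝ) (K : Set (Euc N)) (r₀ : ℝ) (x : Euc N) : ℝ :=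
  sInf {r : ℝ | 0 < r ∧ ∀ t ∈ Icc r (r₀ / 4), flatness K x t ≤ τ}

/-- The bad region `R(x₀,r₀)`. -/
def badRegion (τ A : ℝ) (K : Set (Euc N)) (x₀ : Euc N) (r₀ : ℝ) : Set (Euc N) :=
  ⋃ x ∈ K ∩ closure (ball x₀ (3 * r₀ / 4)),
    ⋃ (_ : 0 < stopR τ K r₀ x), ball x (A * stopR τ K r₀ x)

/-- The bad mass `m_K(x₀,r₀)`. -/
def badMass (τ A : ℝ) (K : Set (Euc N)) (x₀ : Euc N) (r₀ : ℝ) : ℝ :=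
  (μH[(N : ℝ) - 1] (K ∩ badRegion τ A K x₀ r₀)).toReal / r₀ ^ (N - 1)

end

/-!
By compactness of the unit sphere the infimum defining `β_K(x₀,r₀)` is attained by a unit normal
`ν`, so `K ∩ B(x₀,r₀)` lies in the slab `|⟪y - x₀, ν⟫| ≤ s := ε₀ r₀`, while the hyperplane stays
within `s` of `K`. As `x` lies in that slab, the parallel hyperplane through `x` does the same
job in `B(x,r)` with `2s ≤ r/2`, whence `β_K(x,r) ≤ 1/2`.

For separation, the two parts of `B(x₀,r₀)` beyond the slab are convex and miss `K`; each meets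
one of the balls `D^±`, hence lies in the corresponding component, and these differ. The balls
`B(x ± (3/4) r ν, r/4)` miss `K` and have their centres in these two parts, so they lie in
distinct components of `B(x,r) \ K`. When `4s ≥ r₀` the ball `B(x,r)` is `B(x₀,r₀)` itself.
-/

section InnerProductSpace

variable {E : Type*} [NormedAddCommGroup E] [InnerProductSpace ℝ E]

theorem inner_sub_inner_smul_self {ν : E} (hν : ‖ν‖ = 1) (v : E) : ⟪v - ⟪v, ν⟫ • ν, ν⟫ = 0 := by
  rw [inner_sub_left, real_inner_smul_left, real_inner_self_eq_norm_sq, hν]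
  ring

theorem norm_sub_inner_smul_le {ν : E} (hν : ‖ν‖ = 1) (v : E) : ‖v - ⟪v, ν⟫ • ν‖ ≤ ‖v‖ := by
  have hsq : ‖v - ⟪v, ν⟫ • ν‖ ^ 2 = ‖v‖ ^ 2 - ⟪v, ν⟫ ^ 2 := by
    rw [norm_sub_sq_real, real_inner_smul_right, norm_smul, hν, Real.norm_eq_abs]
    ring_nf
    rw [sq_abs]
    ring
  exact (sq_le_sq₀ (norm_nonneg _) (norm_nonneg _)).1 (by rw [hsq]; linarith [sq_nonneg ⟪v, ν⟫])

theorem infDist_setOf_inner_sub_eq_zero {ν : E} (hν : ‖ν‖ = 1) (x y : E) :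
    infDist y {z | ⟪z - x, ν⟫ = 0} = |⟪y - x, ν⟫| := by
  have hproj : y - ⟪y - x, ν⟫ • ν ∈ {z | ⟪z - x, ν⟫ = 0} := by
    show ⟪_ - x, ν⟫ = 0
    rw [sub_right_comm]
    exact inner_sub_inner_smul_self hν (y - x)
  refine le_antisymm ?_ ((le_infDist ⟨_, hproj⟩).2 fun z hz => ?_)
  · refine (infDist_le_dist_of_mem hproj).trans_eq ?_
    rw [dist_eq_norm, sub_sub_cancel, norm_smul, hν, mul_one, Real.norm_eq_abs]
  · have hz : ⟪z - x, ν⟫ = 0 := hz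
    calc |⟪y - x, ν⟫| = |⟪y - z, ν⟫| := by
          rw [← sub_sub_sub_cancel_right y z x, inner_sub_left (y - x), hz, sub_zero]
      _ ≤ ‖y - z‖ * ‖ν‖ := abs_real_inner_le_norm _ _
      _ = dist y z := by rw [hν, mul_one, dist_eq_norm]

def InSlab (K : Set E) (x : E) (r : ℝ) (ν : E) (s : ℝ) : Prop :=
  ∀ y ∈ K ∩ ball x r, |⟪y - x, ν⟫| ≤ s

/-- The bilateral condition in the definition of `flatness K x r ≤ s / r`, for the hyperplane
through `x` with unit normal `ν`. -/
def FlatWithin (K : Set E) (x : E) (r : ℝ) (ν : E) (s : ℝ) : Prop :=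
  InSlab K x r ν s ∧ ∀ y ∈ ball x r, ⟪y - x, ν⟫ = 0 → infDist y K ≤ s

variable {K : Set E} {x x₀ ν : E} {r r₀ s : ℝ}

theorem InSlab.neg (h : InSlab K x r ν s) : InSlab K x r (-ν) s := fun y hy => by
  simpa only [inner_neg_right, abs_neg] using h y hy

theorem InSlab.subball (h : InSlab K x₀ r₀ ν s) (hx : x ∈ K ∩ ball x₀ r₀)
    (hsub : ball x r ⊆ ball x₀ r₀) : InSlab K x r ν (2 * s) := fun y hy => by
  have hy₀ := h y ⟨hy.1, hsub hy.2⟩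
  have hx₀ := h x hx
  rw [← sub_sub_sub_cancel_right y x x₀, inner_sub_left]
  linarith [abs_sub (⟪y - x₀, ν⟫) (⟪x - x₀, ν⟫)]

theorem FlatWithin.nonneg (h : FlatWithin K x r ν s) (hr : 0 < r) : 0 ≤ s :=
  infDist_nonneg.trans (h.2 x (mem_ball_self hr) (by simp))

/-- Projecting `y` onto the hyperplane moves it by `|⟪y - x, ν⟫|` and keeps it in the ball. -/
theorem FlatWithin.infDist_le (h : FlatWithin K x r ν s) (hν : ‖ν‖ = 1) {y : E}
    (hy : y ∈ ball x r) : infDist y K ≤ s + |⟪y - x, ν⟫| := by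
  set y' := y - ⟪y - x, ν⟫ • ν
  have hy'x : y' - x = (y - x) - ⟪y - x, ν⟫ • ν := sub_right_comm _ _ _
  have hy' : y' ∈ ball x r := by
    rw [mem_ball, dist_eq_norm, hy'x]
    exact (norm_sub_inner_smul_le hν _).trans_lt (mem_ball_iff_norm.1 hy)
  have hdist : dist y y' = |⟪y - x, ν⟫| := by
    rw [dist_eq_norm, sub_sub_cancel, norm_smul, hν, mul_one, Real.norm_eq_abs]
  calc infDist y K ≤ infDist y' K + dist y y' := infDist_le_infDist_add_dist
    _ ≤ s + |⟪y - x, ν⟫| := by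
        rw [hdist]
        gcongr
        exact h.2 y' hy' (by rw [hy'x]; exact inner_sub_inner_smul_self hν _)

theorem FlatWithin.subball (h : FlatWithin K x₀ r₀ ν s) (hν : ‖ν‖ = 1)
    (hx : x ∈ K ∩ ball x₀ r₀) (hsub : ball x r ⊆ ball x₀ r₀) : FlatWithin K x r ν (2 * s) := by
  refine ⟨h.1.subball hx hsub, fun y hy hy0 => ?_⟩
  have hyx : ⟪y - x₀, ν⟫ = ⟪x - x₀, ν⟫ := by
    rw [← sub_add_sub_cancel y x x₀, inner_add_left, hy0, zero_add]
  linarith [h.infDist_le hν (hsub hy), hyx ▸ h.1 x hx]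

theorem exists_flatWithin_of_forall_pos [ProperSpace E]
    (h : ∀ η > 0, ∃ ν : E, ‖ν‖ = 1 ∧ FlatWithin K x r ν (s + η)) :
    ∃ ν : E, ‖ν‖ = 1 ∧ FlatWithin K x r ν s := by
  obtain ⟨η, -, hη_pos, hη⟩ := exists_seq_strictAnti_tendsto (0 : ℝ)
  choose ν hν hflat using fun n => h (η n) (hη_pos n)
  obtain ⟨ν₀, hν₀, φ, hφ, hlim⟩ := (isCompact_sphere (0 : E) 1).tendsto_subseq
    (fun n => mem_sphere_zero_iff_norm.2 (hν n))
  have hbound : Tendsto (fun n => s + η (φ n)) atTop (𝓝 s) := by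
    simpa using tendsto_const_nhds.add (hη.comp hφ.tendsto_atTop)
  have hinner (y : E) : Tendsto (fun n => |⟪y - x, ν (φ n)⟫|) atTop (𝓝 |⟪y - x, ν₀⟫|) :=
    (tendsto_const_nhds.inner hlim).abs
  refine ⟨ν₀, mem_sphere_zero_iff_norm.1 hν₀, fun y hy => ?_, fun y hy hy0 => ?_⟩
  · exact le_of_tendsto_of_tendsto' (hinner y) hbound fun n => (hflat (φ n)).1 y hy
  · have := le_of_tendsto_of_tendsto' tendsto_const_nhds (hbound.add (hinner y))
      fun n => (hflat (φ n)).infDist_le (hν _) hy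
    simpa [hy0] using this

/-- The points `x ± r u` of `closedBall x r` lie in `closedBall x₀ r₀`, so the parallelogram law
gives `‖x - x₀‖² + r² ≤ r₀²`. -/
theorem eq_of_ball_subset_ball_of_le [Nontrivial E] (hr : 0 < r) (hsub : ball x r ⊆ ball x₀ r₀)
    (hle : r₀ ≤ r) : x = x₀ ∧ r = r₀ := by
  obtain ⟨u, hu⟩ := exists_norm_eq E zero_le_one
  have hcl : closedBall x r ⊆ closedBall x₀ r₀ := by
    rw [← closure_ball x hr.ne']
    exact (closure_mono hsub).trans closure_ball_subset_closedBall
  have hmem (c : ℝ) (hc : |c| = r) : ‖(x - x₀) + c • u‖ ≤ r₀ := by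
    rw [← add_sub_right_comm, ← mem_closedBall_iff_norm]
    refine hcl (mem_closedBall_iff_norm.2 ?_)
    rw [add_sub_cancel_left, norm_smul, hu, mul_one, Real.norm_eq_abs, hc]
  have hplus := hmem r (abs_of_pos hr)
  have hminus := hmem (-r) (by rw [abs_neg, abs_of_pos hr])
  rw [neg_smul, ← sub_eq_add_neg] at hminus
  have hpar := parallelogram_law_with_norm ℝ (x - x₀) (r • u)
  rw [norm_smul, hu, mul_one, Real.norm_eq_abs, abs_of_pos hr] at hpar
  have hkey : ‖x - x₀‖ ^ 2 + r ^ 2 ≤ r₀ ^ 2 := by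
    nlinarith [norm_nonneg (x - x₀ + r • u), norm_nonneg (x - x₀ - r • u)]
  have hr₀ : 0 ≤ r₀ := (norm_nonneg _).trans hplus
  have hd : ‖x - x₀‖ = 0 := by nlinarith [norm_nonneg (x - x₀)]
  exact ⟨sub_eq_zero.1 (norm_eq_zero.1 hd), le_antisymm (by nlinarith) hle⟩

def halfBall (x₀ : E) (r₀ : ℝ) (ν : E) (s : ℝ) : Set E :=
  {y | y ∈ ball x₀ r₀ ∧ s < ⟪y - x₀, ν⟫}

theorem convex_halfBall : Convex ℝ (halfBall x₀ r₀ ν s) := by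
  have : halfBall x₀ r₀ ν s = ball x₀ r₀ ∩ {y | s + ⟪x₀, ν⟫ < ⟪y, ν⟫} := by
    ext y
    simp only [halfBall, mem_inter_iff, mem_ofPred, inner_sub_left, lt_sub_iff_add_lt]
  rw [this]
  exact (convex_ball x₀ r₀).inter
    (convex_halfSpace_gt ⟨fun a b => inner_add_left a b ν, fun c a => real_inner_smul_left a ν c⟩ _)

theorem InSlab.halfBall_subset (h : InSlab K x₀ r₀ ν s) : halfBall x₀ r₀ ν s ⊆ ball x₀ r₀ \ K :=
  fun y hy => ⟨hy.1, fun hyK => (h y ⟨hyK, hy.1⟩).not_gt (hy.2.trans_le (le_abs_self _))⟩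

theorem add_smul_mem_halfBall (hν : ‖ν‖ = 1) (hx : |⟪x - x₀, ν⟫| ≤ s) (hr : 0 < r)
    (hrs : 4 * s ≤ r) (hsub : ball x r ⊆ ball x₀ r₀) :
    x + (3 / 4 * r) • ν ∈ halfBall x₀ r₀ ν s := by
  refine ⟨hsub ?_, ?_⟩
  · rw [mem_ball_iff_norm, add_sub_cancel_left, norm_smul, hν, mul_one, Real.norm_eq_abs,
      abs_of_pos (by positivity)]
    linarith
  · rw [add_sub_right_comm, inner_add_left, real_inner_smul_left, real_inner_self_eq_norm_sq, hν]
    linarith [neg_abs_le ⟪x - x₀, ν⟫, (abs_nonneg _).trans hx]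

/-- The halfball reaches into the ball `B(x₀ + (3/4) r₀ u, r₀/4)` when `u` and `ν` point to the
same side, so the component containing that ball swallows the whole halfball. -/
theorem halfBall_subset_connectedComponentIn {u : E} (hu : ‖u‖ = 1) (hν : ‖ν‖ = 1)
    (huν : 0 ≤ ⟪u, ν⟫) (hK : InSlab K x₀ r₀ ν s) (hs₀ : 0 ≤ s) (hs : 4 * s < r₀)
    (hD : ball (x₀ + (3 / 4 * r₀) • u) (r₀ / 4) ⊆
      connectedComponentIn (ball x₀ r₀ \ K) (x₀ + (3 / 4 * r₀) • u)) :
    halfBall x₀ r₀ ν s ⊆ connectedComponentIn (ball x₀ r₀ \ K) (x₀ + (3 / 4 * r₀) • u) := by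
  set q := x₀ + (3 / 4 * r₀) • u
  obtain ⟨t, hst, htr⟩ := exists_between (show s < r₀ / 4 by linarith)
  have hqx₀ : q - x₀ = (3 / 4 * r₀) • u := add_sub_cancel_left _ _
  have hnorm_t : ‖t • ν‖ = t := by
    rw [norm_smul, hν, mul_one, Real.norm_eq_abs, abs_of_nonneg (by linarith)]
  have hzD : q + t • ν ∈ ball q (r₀ / 4) := by
    rw [mem_ball_iff_norm, add_sub_cancel_left, hnorm_t]
    linarith
  have hzH : q + t • ν ∈ halfBall x₀ r₀ ν s := by
    have hq : ‖q - x₀‖ = 3 / 4 * r₀ := by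
      rw [hqx₀, norm_smul, hu, mul_one, Real.norm_eq_abs, abs_of_pos (by linarith)]
    refine ⟨?_, ?_⟩
    · rw [mem_ball_iff_norm, add_sub_right_comm]
      linarith [norm_add_le (q - x₀) (t • ν)]
    · rw [add_sub_right_comm, inner_add_left, hqx₀, real_inner_smul_left, real_inner_smul_left,
        real_inner_self_eq_norm_sq, hν]
      nlinarith [mul_nonneg (show (0 : ℝ) ≤ 3 / 4 * r₀ by linarith) huν]
  rw [connectedComponentIn_eq (hD hzD)]
  exact convex_halfBall.isPreconnected.subset_connectedComponentIn hzH hK.halfBall_subset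

theorem ball_add_smul_subset_connectedComponentIn (hν : ‖ν‖ = 1) (hr : 0 < r)
    (hK : InSlab K x r ν (r / 2)) :
    ball (x + (3 / 4 * r) • ν) (r / 4) ⊆
      connectedComponentIn (ball x r \ K) (x + (3 / 4 * r) • ν) := by
  set c := x + (3 / 4 * r) • ν
  have hcx : c - x = (3 / 4 * r) • ν := add_sub_cancel_left _ _
  have hdisk : ball c (r / 4) ⊆ ball x r \ K := by
    intro y hy
    have hyc : ‖y - c‖ < r / 4 := mem_ball_iff_norm.1 hy
    have hsplit : y - x = (y - c) + (c - x) := (sub_add_sub_cancel _ _ _).symm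
    have hc : ‖c - x‖ = 3 / 4 * r := by
      rw [hcx, norm_smul, hν, mul_one, Real.norm_eq_abs, abs_of_pos (by positivity)]
    refine ⟨?_, fun hyK => ?_⟩
    · rw [mem_ball_iff_norm, hsplit]
      linarith [norm_add_le (y - c) (c - x)]
    · have hyx : r / 2 < ⟪y - x, ν⟫ := by
        rw [hsplit, inner_add_left, hcx, real_inner_smul_left, real_inner_self_eq_norm_sq, hν]
        have := abs_real_inner_le_norm (y - c) ν
        rw [hν, mul_one] at this
        linarith [neg_abs_le ⟪y - c, ν⟫]
      have hyB : y ∈ ball x r := by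
        rw [mem_ball_iff_norm, hsplit]
        linarith [norm_add_le (y - c) (c - x)]
      exact (hK y ⟨hyK, hyB⟩).not_gt (hyx.trans_le (le_abs_self _))
  exact (convex_ball c _).isPreconnected.subset_connectedComponentIn
    (mem_ball_self (by positivity)) hdisk

end InnerProductSpace

theorem connectedComponentIn_ne_of_subset {X : Type*} [TopologicalSpace X] {s t : Set X}
    {a b : X} (hts : t ⊆ s) (hb : b ∈ t)
    (hne : connectedComponentIn s a ≠ connectedComponentIn s b) :
    connectedComponentIn t a ≠ connectedComponentIn t b := fun heq =>
  hne (connectedComponentIn_eq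
    (connectedComponentIn_mono a hts (heq ▸ mem_connectedComponentIn hb)))

theorem bddAbove_range_infDist_inter_ball {α : Type*} [PseudoMetricSpace α] {S T : Set α}
    {a : α} {r : ℝ} (ha : a ∈ S) :
    BddAbove (range fun y : ↥(T ∩ ball a r) => infDist (y : α) S) := by
  refine ⟨r, ?_⟩
  rintro _ ⟨y, rfl⟩
  exact (infDist_le_dist_of_mem ha).trans (mem_ball.1 y.2.2).le

section Euclidean

variable {N : ℕ} {K : Set (Euc N)} {x x₀ ν : Euc N} {r r₀ s : ℝ}

theorem mem_hplane_self (x ν : Euc N) : x ∈ hplane x ν := by simp [hplane]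

theorem infDist_hplane (hν : ‖ν‖ = 1) (x y : Euc N) : infDist y (hplane x ν) = |⟪y - x, ν⟫| :=
  infDist_setOf_inner_sub_eq_zero hν x y

theorem flatness_le_of_flatWithin (hν : ‖ν‖ = 1) (hr : 0 < r) (h : FlatWithin K x r ν s) :
    flatness K x r ≤ s / r := by
  have hs := h.nonneg hr
  rw [flatness, inv_mul_le_iff₀ hr, mul_div_cancel₀ _ hr.ne']
  refine ciInf_le_of_le ⟨0, ?_⟩ ⟨ν, hν⟩ (max_le ?_ ?_)
  · rintro _ ⟨w, rfl⟩
    exact le_max_of_le_right (Real.iSup_nonneg fun _ => infDist_nonneg)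
  · exact Real.iSup_le (fun y => (infDist_hplane hν x y).trans_le (h.1 y y.2)) hs
  · exact Real.iSup_le (fun y => h.2 y y.2.2 y.2.1) hs

theorem exists_flatWithin_of_flatness_le (hN : 0 < N) (hx : x ∈ K) (hr : 0 < r) {ε : ℝ}
    (h : flatness K x r ≤ ε) : ∃ ν : Euc N, ‖ν‖ = 1 ∧ FlatWithin K x r ν (ε * r) := by
  have : Nonempty (Fin N) := ⟨⟨0, hN⟩⟩
  obtain ⟨ν₁, hν₁⟩ := exists_norm_eq (Euc N) zero_le_one
  have : Nonempty {ν : Euc N // ‖ν‖ = 1} := ⟨⟨ν₁, hν₁⟩⟩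
  rw [flatness, inv_mul_le_iff₀ hr] at h
  refine exists_flatWithin_of_forall_pos fun η hη => ?_
  obtain ⟨⟨ν, hν⟩, hlt⟩ := exists_lt_of_ciInf_lt (h.trans_lt (by linarith : r * ε < ε * r + η))
  refine ⟨ν, hν, fun y hy => ?_, fun y hy hy0 => ?_⟩
  · rw [← infDist_hplane hν]
    exact (le_ciSup (bddAbove_range_infDist_inter_ball (mem_hplane_self x ν)) ⟨y, hy⟩).trans
      ((le_max_left _ _).trans hlt.le)
  · exact (le_ciSup (bddAbove_range_infDist_inter_ball hx) ⟨y, hy0, hy⟩).trans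
      ((le_max_right _ _).trans hlt.le)

theorem SeparatesWith.subball {ν₀ : Euc N} (hsep : SeparatesWith K x₀ r₀ ν₀) (hν : ‖ν‖ = 1)
    (hν₀ν : 0 ≤ ⟪ν₀, ν⟫) (hK : InSlab K x₀ r₀ ν s) (hs : 4 * s < r₀)
    (hx : x ∈ K ∩ ball x₀ r₀) (hr : 0 < r) (hrs : 4 * s ≤ r) (hsub : ball x r ⊆ ball x₀ r₀) :
    SeparatesWith K x r ν := by
  obtain ⟨hν₀, -, hDpos, hDneg, hne⟩ := hsep
  have hxs : |⟪x - x₀, ν⟫| ≤ s := hK x hx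
  have hs₀ : 0 ≤ s := (abs_nonneg _).trans hxs
  have hx_neg : x - (3 / 4 * r) • ν = x + (3 / 4 * r) • -ν := by rw [smul_neg, sub_eq_add_neg]
  have hx₀_neg : x₀ - (3 / 4 * r₀) • ν₀ = x₀ + (3 / 4 * r₀) • -ν₀ := by
    rw [smul_neg, sub_eq_add_neg]
  have hKx : InSlab K x r ν (r / 2) := fun y hy => (hK.subball hx hsub y hy).trans (by linarith)
  have hpos : halfBall x₀ r₀ ν s ⊆ posCompo K x₀ r₀ ν₀ :=
    halfBall_subset_connectedComponentIn hν₀ hν hν₀ν hK hs₀ hs hDpos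
  have hneg : halfBall x₀ r₀ (-ν) s ⊆ negCompo K x₀ r₀ ν₀ := by
    rw [negCompo, hx₀_neg] at hDneg ⊢
    exact halfBall_subset_connectedComponentIn (by rwa [norm_neg]) (by rwa [norm_neg])
      (by rwa [inner_neg_neg]) hK.neg hs₀ hs hDneg
  have hp : x + (3 / 4 * r) • ν ∈ halfBall x₀ r₀ ν s := add_smul_mem_halfBall hν hxs hr hrs hsub
  have hm : x + (3 / 4 * r) • -ν ∈ halfBall x₀ r₀ (-ν) s :=
    add_smul_mem_halfBall (by rwa [norm_neg]) (by rwa [inner_neg_right, abs_neg]) hr hrs hsub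
  have hDpos' := ball_add_smul_subset_connectedComponentIn hν hr hKx
  have hDneg' := ball_add_smul_subset_connectedComponentIn (by rwa [norm_neg]) hr hKx.neg
  refine ⟨hν, fun y hy => ?_, hDpos', by rwa [negCompo, hx_neg], ?_⟩
  · rw [infDist_hplane hν]
    exact hKx y hy
  · rw [posCompo, negCompo, hx_neg]
    refine connectedComponentIn_ne_of_subset (sdiff_subset_sdiff_left hsub)
      (connectedComponentIn_subset _ _ (hDneg' (mem_ball_self (by positivity)))) ?_
    rwa [← connectedComponentIn_eq (hpos hp), ← connectedComponentIn_eq (hneg hm)]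

theorem Separates.subball (hsep : Separates K x₀ r₀) (hν : ‖ν‖ = 1) (hK : InSlab K x₀ r₀ ν s)
    (hs : 4 * s < r₀) (hx : x ∈ K ∩ ball x₀ r₀) (hr : 0 < r) (hrs : 4 * s ≤ r)
    (hsub : ball x r ⊆ ball x₀ r₀) : Separates K x r := by
  obtain ⟨ν₀, hsep⟩ := hsep
  rcases le_total 0 ⟪ν₀, ν⟫ with hν₀ν | hν₀ν
  · exact ⟨ν, hsep.subball hν hν₀ν hK hs hx hr hrs hsub⟩
  · refine ⟨-ν, hsep.subball (by rwa [norm_neg]) ?_ hK.neg hs hx hr hrs hsub⟩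
    rwa [inner_neg_right, neg_nonneg]

end Euclidean

theorem separation_passes_to_subballs_general (N : ℕ) (hN : 2 ≤ N)
    (K : Set (Euc N)) (x₀ : Euc N) (hx₀ : x₀ ∈ K) (r₀ : ℝ) (hr₀ : 0 < r₀)
    (ε₀ : ℝ) (hβ : flatness K x₀ r₀ ≤ ε₀) (hsep : Separates K x₀ r₀) :
    ∀ x ∈ K ∩ ball x₀ r₀, ∀ r : ℝ, 0 < r → ball x r ⊆ ball x₀ r₀ → 4 * ε₀ * r₀ ≤ r →
      flatness K x r ≤ 1 / 2 ∧ Separates K x r := by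
  intro x hx r hr hsub hr4
  obtain ⟨ν, hν, hflat⟩ := exists_flatWithin_of_flatness_le (by omega) hx₀ hr₀ hβ
  have hrs : 4 * (ε₀ * r₀) ≤ r := by linarith
  refine ⟨?_, ?_⟩
  · calc flatness K x r ≤ 2 * (ε₀ * r₀) / r :=
          flatness_le_of_flatWithin hν hr (hflat.subball hν hx hsub)
      _ ≤ 1 / 2 := by rw [div_le_iff₀ hr]; linarith
  · rcases lt_or_ge (4 * (ε₀ * r₀)) r₀ with hs | hs
    · exact hsep.subball hν hflat.1 hs hx hr hrs hsub
    · have : Nonempty (Fin N) := ⟨⟨0, by omega⟩⟩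
      obtain ⟨rfl, rfl⟩ := eq_of_ball_subset_ball_of_le hr hsub (by linarith)
      exact hsep

/-- If `K` is `ε₀`-flat and separates in `B(x₀,r₀)`, then it is `1/2`-flat and separates
in every sub-ball `B(x,r) ⊆ B(x₀,r₀)` centred on `K` with `r ≥ 4 ε₀ r₀`. -/
theorem separation_passes_to_subballs (N : ℕ) (hN : 2 ≤ N)
    (Ω : Set (Euc N)) (hΩ : IsOpen Ω) (K : Set (Euc N)) (hK : RelClosedIn K Ω)
    (x₀ : Euc N) (hx₀ : x₀ ∈ K) (r₀ : ℝ) (hr₀ : 0 < r₀) (hB : ball x₀ r₀ ⊆ Ω)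
    (ε₀ : ℝ) (hε₀ : ε₀ ∈ Set.Icc (0 : ℝ) (1 / 2))
    (hβ : flatness K x₀ r₀ ≤ ε₀) (hsep : Separates K x₀ r₀) :
    ∀ x ∈ K ∩ ball x₀ r₀, ∀ r : ℝ, 0 < r → ball x r ⊆ ball x₀ r₀ → 4 * ε₀ * r₀ ≤ r →
      flatness K x r ≤ 1 / 2 ∧ Separates K x r :=
  separation_passes_to_subballs_general N hN K x₀ hx₀ r₀ hr₀ ε₀ hβ hsep
end

section
/- The separating property does not depend on the particular hyperplane: let K be relatively closed in an open set Ω ⊆ ℝ^N, x₀ ∈ K, r₀ > 0 with B(x₀,r₀) ⊆ Ω. Suppose K separates in B(x₀,r₀) with respect to an affine hyperplane P through x₀ (i.e. K ∩ B(x₀,r₀) ⊆ { y : dist(y,P) ≤ r₀/2 } and the two balls B(x₀ ± (3/4) r₀ ν_P, r₀/4), where ν_P is a unit normal to P, lie in distinct connected components of B(x₀,r₀) \ K). If Q is another affine hyperplane through x₀ satisfying K ∩ B(x₀,r₀) ⊆ { y ∈ B(x₀,r₀) : dist(y,Q) ≤ r₀/2 }, then K also separates in B(x₀,r₀) with respect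 to Q, i.e. the two balls B(x₀ ± (3/4) r₀ ν_Q, r₀/4), with ν_Q a unit normal to Q, lie in distinct connected components of B(x₀,r₀) \ K. -/
open Metric MeasureTheory Set Filter
open scoped RealInnerProductSpace ENNReal NNReal Topology

/-! If `K ∩ B(x₀,r₀)` lies in the strip of half-width `r₀/2` around the hyperplane through `x₀`
with unit normal `ν`, the cap `{y ∈ B(x₀,r₀) : ⟪y - x₀, ν⟫ > r₀/2}` is convex and misses `K`, so it
lies in the component of `x₀ + (3/4) r₀ ν`; likewise for the opposite cap. Orient `ν_P` so that
`⟪ν_P, ν_Q⟫ ≥ 0`. Then `v = t (ν_P + ν_Q) / (1 + ⟪ν_P, ν_Q⟫)` satisfies `⟪v, ν_P⟫ = ⟪v, ν_Q⟫ = t` and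
`‖v‖² ≤ 2t²`, so for `t = 3/5 r₀` the point `x₀ + v` lies in the upper caps of both hyperplanes and
`x₀ - v` in both lower caps: the components attached to `ν_Q` are those attached to `ν_P`. -/

section InnerProductSpace

variable {E : Type*} [NormedAddCommGroup E] [InnerProductSpace ℝ E]

lemma exists_inner_eq_of_inner_nonneg {a b : E} (ha : ‖a‖ = 1) (hb : ‖b‖ = 1)
    (hab : 0 ≤ ⟪a, b⟫) (t : ℝ) : ∃ v : E, ⟪v, a⟫ = t ∧ ⟪v, b⟫ = t ∧ ‖v‖ ^ 2 ≤ 2 * t ^ 2 := by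
  have haa : ⟪a, a⟫ = 1 := by rw [real_inner_self_eq_norm_sq, ha, one_pow]
  have hbb : ⟪b, b⟫ = 1 := by rw [real_inner_self_eq_norm_sq, hb, one_pow]
  have hba : ⟪b, a⟫ = ⟪a, b⟫ := real_inner_comm a b
  have hd : 0 < 1 + ⟪a, b⟫ := by linarith
  refine ⟨(t / (1 + ⟪a, b⟫)) • (a + b), ?_, ?_, ?_⟩
  · rw [real_inner_smul_left, inner_add_left, haa, hba]
    field_simp
  · rw [real_inner_smul_left, inner_add_left, hbb]
    field_simp
    ring
  · calc ‖(t / (1 + ⟪a, b⟫)) • (a + b)‖ ^ 2 = 2 * t ^ 2 / (1 + ⟪a, b⟫) := by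
          rw [← real_inner_self_eq_norm_sq, real_inner_smul_left, real_inner_smul_right,
            inner_add_left, inner_add_right, inner_add_right, haa, hbb, hba]
          field_simp
          ring
      _ ≤ 2 * t ^ 2 := div_le_self (by positivity) (by linarith)

end InnerProductSpace

section Separation

variable {N : ℕ} {K : Set (Euc N)} {x₀ ν : Euc N} {r₀ : ℝ}

lemma hplane_neg (x ν : Euc N) : hplane x (-ν) = hplane x ν := by
  ext y
  simp [hplane]

lemma posCompo_neg (K : Set (Euc N)) (x₀ : Euc N) (r₀ : ℝ) (ν : Euc N) :
    posCompo K x₀ r₀ (-ν) = negCompo K x₀ r₀ ν := by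
  rw [posCompo, negCompo, smul_neg, ← sub_eq_add_neg]

lemma negCompo_neg (K : Set (Euc N)) (x₀ : Euc N) (r₀ : ℝ) (ν : Euc N) :
    negCompo K x₀ r₀ (-ν) = posCompo K x₀ r₀ ν := by
  rw [← posCompo_neg, neg_neg]

lemma inner_sub_le_infDist_hplane (hν : ‖ν‖ = 1) (y : Euc N) :
    ⟪y - x₀, ν⟫ ≤ infDist y (hplane x₀ ν) := by
  refine (le_infDist ⟨x₀, by simp [hplane]⟩).2 fun p (hp : ⟪p - x₀, ν⟫ = 0) => ?_
  calc ⟪y - x₀, ν⟫ = ⟪y - x₀, ν⟫ - ⟪p - x₀, ν⟫ := by rw [hp, sub_zero]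
    _ = ⟪y - p, ν⟫ := by rw [← inner_sub_left, sub_sub_sub_cancel_right]
    _ ≤ ‖y - p‖ * ‖ν‖ := real_inner_le_norm _ _
    _ = dist y p := by rw [hν, mul_one, dist_eq_norm]

lemma add_mem_posCompo (hν : ‖ν‖ = 1)
    (hstrip : ∀ y ∈ K ∩ ball x₀ r₀, infDist y (hplane x₀ ν) ≤ r₀ / 2)
    {v : Euc N} (hv : ‖v‖ < r₀) (hvν : r₀ / 2 < ⟪v, ν⟫) :
    x₀ + v ∈ posCompo K x₀ r₀ ν := by
  set C := ball x₀ r₀ ∩ {y | r₀ / 2 < ⟪y - x₀, ν⟫}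
  have hC : Convex ℝ C := by
    have hlin : IsLinearMap ℝ fun y : Euc N => ⟪y, ν⟫ :=
      ⟨fun y z => inner_add_left y z ν, fun c y => real_inner_smul_left y ν c⟩
    have hhalf : {y | r₀ / 2 < ⟪y - x₀, ν⟫} = {y | r₀ / 2 + ⟪x₀, ν⟫ < ⟪y, ν⟫} := by
      ext y
      change r₀ / 2 < ⟪y - x₀, ν⟫ ↔ r₀ / 2 + ⟪x₀, ν⟫ < ⟪y, ν⟫
      rw [inner_sub_left]
      constructor <;> intro h <;> linarith
    exact (convex_ball x₀ r₀).inter (hhalf ▸ convex_halfSpace_gt hlin _)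
  have hCK : C ⊆ ball x₀ r₀ \ K := fun y ⟨hyB, hy⟩ =>
    ⟨hyB, fun hyK => (hy.trans_le ((inner_sub_le_infDist_hplane hν y).trans
      (hstrip y ⟨hyK, hyB⟩))).false⟩
  have hr₀ : 0 < r₀ := by
    have := real_inner_le_norm v ν
    rw [hν, mul_one] at this
    linarith
  have hcenter : x₀ + (3 / 4 * r₀) • ν ∈ C := by
    refine ⟨?_, ?_⟩
    · rw [mem_ball, dist_eq_norm, add_sub_cancel_left, norm_smul, hν, mul_one,
        Real.norm_of_nonneg (by positivity)]
      linarith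
    · rw [Set.mem_ofPred_eq, add_sub_cancel_left, real_inner_smul_left,
        real_inner_self_eq_norm_sq, hν]
      linarith
  have hx : x₀ + v ∈ C := ⟨by rwa [mem_ball, dist_eq_norm, add_sub_cancel_left], by
    rwa [Set.mem_ofPred_eq, add_sub_cancel_left]⟩
  exact hC.isPreconnected.subset_connectedComponentIn hcenter hCK hx

lemma sub_mem_negCompo (hν : ‖ν‖ = 1)
    (hstrip : ∀ y ∈ K ∩ ball x₀ r₀, infDist y (hplane x₀ ν) ≤ r₀ / 2)
    {v : Euc N} (hv : ‖v‖ < r₀) (hvν : r₀ / 2 < ⟪v, ν⟫) :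
    x₀ - v ∈ negCompo K x₀ r₀ ν := by
  rw [← posCompo_neg, sub_eq_add_neg]
  exact add_mem_posCompo (by rwa [norm_neg]) (by rwa [hplane_neg]) (by rwa [norm_neg])
    (by rwa [inner_neg_neg])

lemma ball_subset_posCompo (hν : ‖ν‖ = 1)
    (hstrip : ∀ y ∈ K ∩ ball x₀ r₀, infDist y (hplane x₀ ν) ≤ r₀ / 2) :
    ball (x₀ + (3 / 4 * r₀) • ν) (r₀ / 4) ⊆ posCompo K x₀ r₀ ν := by
  intro y hy
  set c := x₀ + (3 / 4 * r₀) • ν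
  have hyc : ‖y - c‖ < r₀ / 4 := by rwa [mem_ball, dist_eq_norm] at hy
  have hr₀ : 0 < r₀ := by linarith [norm_nonneg (y - c)]
  have hsplit : y - x₀ = (y - c) + (3 / 4 * r₀) • ν := by simp only [c]; abel
  have hinner : |⟪y - c, ν⟫| ≤ ‖y - c‖ := by
    simpa only [hν, mul_one] using abs_real_inner_le_norm (y - c) ν
  rw [← add_sub_cancel x₀ y]
  refine add_mem_posCompo hν hstrip ?_ ?_
  · calc ‖y - x₀‖ ≤ ‖y - c‖ + ‖(3 / 4 * r₀) • ν‖ := hsplit ▸ norm_add_le _ _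
      _ < r₀ := by
        rw [norm_smul, hν, mul_one, Real.norm_of_nonneg (by positivity)]
        linarith
  · rw [hsplit, inner_add_left, real_inner_smul_left, real_inner_self_eq_norm_sq, hν]
    linarith [neg_abs_le ⟪y - c, ν⟫]

lemma ball_subset_negCompo (hν : ‖ν‖ = 1)
    (hstrip : ∀ y ∈ K ∩ ball x₀ r₀, infDist y (hplane x₀ ν) ≤ r₀ / 2) :
    ball (x₀ - (3 / 4 * r₀) • ν) (r₀ / 4) ⊆ negCompo K x₀ r₀ ν := by
  rw [← posCompo_neg, sub_eq_add_neg, ← smul_neg]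
  exact ball_subset_posCompo (by rwa [norm_neg]) (by rwa [hplane_neg])

lemma posCompo_eq_of_inner_nonneg (hr₀ : 0 < r₀) {ν ν' : Euc N} (hν : ‖ν‖ = 1)
    (hν' : ‖ν'‖ = 1) (hstrip : ∀ y ∈ K ∩ ball x₀ r₀, infDist y (hplane x₀ ν) ≤ r₀ / 2)
    (hstrip' : ∀ y ∈ K ∩ ball x₀ r₀, infDist y (hplane x₀ ν') ≤ r₀ / 2)
    (hνν' : 0 ≤ ⟪ν, ν'⟫) : posCompo K x₀ r₀ ν = posCompo K x₀ r₀ ν' := by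
  obtain ⟨v, hvν, hvν', hv⟩ := exists_inner_eq_of_inner_nonneg hν hν' hνν' (3 / 5 * r₀)
  have hvr : ‖v‖ < r₀ := lt_of_pow_lt_pow_left₀ 2 hr₀.le (by nlinarith)
  have ht : r₀ / 2 < 3 / 5 * r₀ := by linarith
  exact (connectedComponentIn_eq (add_mem_posCompo hν hstrip hvr (hvν ▸ ht))).trans
    (connectedComponentIn_eq (add_mem_posCompo hν' hstrip' hvr (hvν' ▸ ht))).symm

lemma negCompo_eq_of_inner_nonneg (hr₀ : 0 < r₀) {ν ν' : Euc N} (hν : ‖ν‖ = 1)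
    (hν' : ‖ν'‖ = 1) (hstrip : ∀ y ∈ K ∩ ball x₀ r₀, infDist y (hplane x₀ ν) ≤ r₀ / 2)
    (hstrip' : ∀ y ∈ K ∩ ball x₀ r₀, infDist y (hplane x₀ ν') ≤ r₀ / 2)
    (hνν' : 0 ≤ ⟪ν, ν'⟫) : negCompo K x₀ r₀ ν = negCompo K x₀ r₀ ν' := by
  rw [← posCompo_neg, ← posCompo_neg]
  exact posCompo_eq_of_inner_nonneg (ν := -ν) (ν' := -ν') hr₀ (by rwa [norm_neg])
    (by rwa [norm_neg]) (by rwa [hplane_neg]) (by rwa [hplane_neg]) (by rwa [inner_neg_neg])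

end Separation

theorem separates_independent_of_hyperplane_general (N : ℕ) (K : Set (Euc N))
    (x₀ : Euc N) (r₀ : ℝ) (hr₀ : 0 < r₀)
    (νP : Euc N) (hsepP : SeparatesWith K x₀ r₀ νP)
    (νQ : Euc N) (hνQ : ‖νQ‖ = 1)
    (hQ : ∀ y ∈ K ∩ ball x₀ r₀, infDist y (hplane x₀ νQ) ≤ r₀ / 2) :
    SeparatesWith K x₀ r₀ νQ := by
  obtain ⟨hνP, hP, -, -, hPne⟩ := hsepP
  refine ⟨hνQ, hQ, ball_subset_posCompo hνQ hQ, ball_subset_negCompo hνQ hQ, ?_⟩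
  rcases le_total 0 ⟪νP, νQ⟫ with hPQ | hPQ
  · rwa [← posCompo_eq_of_inner_nonneg hr₀ hνP hνQ hP hQ hPQ,
      ← negCompo_eq_of_inner_nonneg hr₀ hνP hνQ hP hQ hPQ]
  · have hνP' : ‖-νP‖ = 1 := by rwa [norm_neg]
    have hP' : ∀ y ∈ K ∩ ball x₀ r₀, infDist y (hplane x₀ (-νP)) ≤ r₀ / 2 := by
      rwa [hplane_neg]
    have hPQ' : 0 ≤ ⟪-νP, νQ⟫ := by rw [inner_neg_left]; linarith
    rw [← posCompo_eq_of_inner_nonneg hr₀ hνP' hνQ hP' hQ hPQ',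
      ← negCompo_eq_of_inner_nonneg hr₀ hνP' hνQ hP' hQ hPQ', posCompo_neg, negCompo_neg]
    exact hPne.symm

/-- The separating property does not depend on the particular hyperplane: if `K` separates in
`B(x₀,r₀)` with respect to a hyperplane `P` through `x₀`, and `Q` is another hyperplane through
`x₀` such that `K ∩ B(x₀,r₀)` lies in the strip of half-width `r₀/2` around `Q`, then `K` also
separates with respect to `Q`. -/
theorem separates_independent_of_hyperplane (N : ℕ) (hN : 2 ≤ N)
    (Ω : Set (Euc N)) (hΩ : IsOpen Ω) (K : Set (Euc N)) (hK : RelClosedIn K Ω)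
    (x₀ : Euc N) (hx₀ : x₀ ∈ K) (r₀ : ℝ) (hr₀ : 0 < r₀) (hB : ball x₀ r₀ ⊆ Ω)
    (νP : Euc N) (hsepP : SeparatesWith K x₀ r₀ νP)
    (νQ : Euc N) (hνQ : ‖νQ‖ = 1)
    (hQ : ∀ y ∈ K ∩ ball x₀ r₀, infDist y (hplane x₀ νQ) ≤ r₀ / 2) :
    SeparatesWith K x₀ r₀ νQ :=
  separates_independent_of_hyperplane_general N K x₀ r₀ hr₀ νP hsepP νQ hνQ hQ
end

section
/- Equivalence of unilateral and bilateral flatness for separating sets: let K be relatively closed in an open set Ω ⊆ ℝ^N, x₀ ∈ K, r₀ > 0 with B(x₀,r₀) ⊆ Ω. Suppose there exist ε ∈ (0,1/2] and an affine hyperplane P through x₀ such that K ∩ B(x₀,r₀) ⊆ { y ∈ B(x₀,r₀) : dist(y,P) ≤ ε r₀ }, and suppose K separates in B(x₀,r₀). Then P ∩ B(x₀,r₀) ⊆ { y : dist(y,K) ≤ 2 ε r₀ }. -/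
open Metric MeasureTheory Set Filter
open scoped RealInnerProductSpace ENNReal NNReal Topology

/-!
If a point `y` of `P ∩ B(x₀,r₀)` were farther than `2εr₀` from `K`, a small ball around `y`
(moved toward `x₀` when `y` is close to the sphere) would join the two caps of the ball cut off
by the strip around `P`, and these caps avoid `K`; so both sides of the strip lie in one
component of `B(x₀,r₀) \ K`. The caps `±⟪z - x₀, ν'⟫ > r₀/2` of the separation also avoid `K`,
contain the centres `x₀ ± (3/4) r₀ ν'`, and reach beyond the strip around `P` (along the
bisector of `±ν'` and `±ν`), so the two components of the separation would coincide.
-/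

theorem IsPreconnected.connectedComponentIn_eq_of_mem {X : Type*} [TopologicalSpace X]
    {S C : Set X} (hC : IsPreconnected C) (hCS : C ⊆ S) {p q : X} (hp : p ∈ C) (hq : q ∈ C) :
    _root_.connectedComponentIn S p = _root_.connectedComponentIn S q :=
  connectedComponentIn_eq (hC.subset_connectedComponentIn hp hCS hq)

section Caps

variable {E : Type*} [NormedAddCommGroup E] [InnerProductSpace ℝ E]

def ballCap (x ν : E) (r c : ℝ) : Set E := ball x r ∩ {z | c < ⟪z - x, ν⟫}

theorem convex_ballCap (x ν : E) (r c : ℝ) : Convex ℝ (ballCap x ν r c) := by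
  refine (convex_ball x r).inter ?_
  have hlin : IsLinearMap ℝ fun z : E => ⟪z, ν⟫ :=
    ⟨fun a b => inner_add_left a b ν, fun t a => real_inner_smul_left a ν t⟩
  convert convex_halfSpace_gt hlin (c + ⟪x, ν⟫) using 1
  ext z
  show c < ⟪z - x, ν⟫ ↔ c + ⟪x, ν⟫ < ⟪z, ν⟫
  rw [inner_sub_left, lt_sub_iff_add_lt]

theorem ballCap_anti {x ν : E} {r c c' : ℝ} (h : c ≤ c') : ballCap x ν r c' ⊆ ballCap x ν r c :=
  fun _ ⟨hz, hzc⟩ => ⟨hz, h.trans_lt hzc⟩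

theorem ballCap_subset_ball_diff {K : Set E} {x ν : E} {r c : ℝ}
    (hK : ∀ z ∈ K ∩ ball x r, |⟪z - x, ν⟫| ≤ c) : ballCap x ν r c ⊆ ball x r \ K :=
  fun z ⟨hz, hzc⟩ => ⟨hz, fun hzK => (hK z ⟨hzK, hz⟩).not_gt (hzc.trans_le (le_abs_self _))⟩

theorem add_smul_mem_ballCap {x ν : E} (hν : ‖ν‖ = 1) {r c t : ℝ} (hc : 0 ≤ c) (hct : c < t)
    (htr : t < r) : x + t • ν ∈ ballCap x ν r c := by
  refine ⟨?_, ?_⟩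
  · rw [mem_ball, dist_eq_norm, add_sub_cancel_left, norm_smul, hν, mul_one, Real.norm_eq_abs,
      abs_of_pos (hc.trans_lt hct)]
    exact htr
  · show c < ⟪x + t • ν - x, ν⟫
    rw [add_sub_cancel_left, real_inner_smul_left, real_inner_self_eq_norm_sq, hν]
    simpa using hct

theorem norm_add_smul_sq {u ν : E} (hν : ‖ν‖ = 1) (hu : ⟪u, ν⟫ = 0) (t : ℝ) :
    ‖u + t • ν‖ ^ 2 = ‖u‖ ^ 2 + t ^ 2 := by
  rw [norm_add_sq_real, real_inner_smul_right, hu, norm_smul, hν, mul_one, Real.norm_eq_abs, sq_abs]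
  ring

-- Move `y` toward `x` by `e`, or to `x` itself if `y` is closer to `x` than `e`.
theorem exists_norm_add_smul_sub_le (x y : E) {e : ℝ} (he : 0 ≤ e) :
    ∃ θ : ℝ, ‖x + θ • (y - x) - y‖ ≤ e ∧ ‖θ • (y - x)‖ + e ≤ max e ‖y - x‖ := by
  by_cases hR : ‖y - x‖ ≤ e
  · refine ⟨0, ?_, ?_⟩
    · simpa [norm_sub_rev] using hR
    · simp
  · rw [not_le] at hR
    have hR0 : 0 < ‖y - x‖ := he.trans_lt hR
    refine ⟨1 - e / ‖y - x‖, le_of_eq ?_, ?_⟩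
    · rw [show x + (1 - e / ‖y - x‖) • (y - x) - y = -((e / ‖y - x‖) • (y - x)) by module,
        norm_neg, norm_smul, Real.norm_eq_abs, abs_of_nonneg (by positivity)]
      field_simp
    · have hθ : 0 ≤ 1 - e / ‖y - x‖ := by rw [sub_nonneg, div_le_one hR0]; exact hR.le
      have hsum : (1 - e / ‖y - x‖) * ‖y - x‖ + e = ‖y - x‖ := by field_simp; ring
      rw [norm_smul, Real.norm_eq_abs, abs_of_nonneg hθ, max_eq_right hR.le, hsum]

theorem exists_mem_ballCap_mem_ball {x y ν : E} (hν : ‖ν‖ = 1) (hy : ⟪y - x, ν⟫ = 0) {r e : ℝ}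
    (hyr : y ∈ ball x r) (he : 0 < e) (her : 2 * e ≤ r) :
    ∃ z ∈ ballCap x ν r e, z ∈ ball y (2 * e) := by
  obtain ⟨θ, hwy, hwx⟩ := exists_norm_add_smul_sub_le x y he.le
  have hR : max e ‖y - x‖ < r := max_lt (by linarith) (by rwa [← dist_eq_norm])
  have hwxν : ⟪θ • (y - x), ν⟫ = 0 := by rw [real_inner_smul_left, hy, mul_zero]
  have hwyν : ⟪x + θ • (y - x) - y, ν⟫ = 0 := by
    rw [show x + θ • (y - x) - y = θ • (y - x) - (y - x) by abel, inner_sub_left, hwxν, hy,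
      sub_zero]
  -- height `3e/2` clears the strip and stays within `2e` of `y`, as `1 + (3/2)² < 2²`
  refine ⟨x + θ • (y - x) + (3 / 2 * e) • ν, ⟨?_, ?_⟩, ?_⟩
  · rw [mem_ball, dist_eq_norm, add_sub_right_comm, add_sub_cancel_left]
    refine lt_of_pow_lt_pow_left₀ 2 (by linarith) ?_
    rw [norm_add_smul_sq hν hwxν]
    nlinarith [norm_nonneg (θ • (y - x))]
  · show e < ⟪x + θ • (y - x) + (3 / 2 * e) • ν - x, ν⟫
    rw [add_sub_right_comm, add_sub_cancel_left, inner_add_left, hwxν, real_inner_smul_left,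
      real_inner_self_eq_norm_sq, hν]
    linarith
  · rw [mem_ball, dist_eq_norm, add_sub_right_comm]
    refine lt_of_pow_lt_pow_left₀ 2 (by linarith) ?_
    rw [norm_add_smul_sq hν hwyν]
    nlinarith [norm_nonneg (x + θ • (y - x) - y)]

theorem exists_mem_ballCap_inter_of_inner_nonneg {u v : E} (hu : ‖u‖ = 1) (hv : ‖v‖ = 1)
    (huv : 0 ≤ ⟪u, v⟫) (x : E) {r : ℝ} (hr : 0 < r) :
    ∃ p, p ∈ ballCap x u r (r / 2) ∩ ballCap x v r (r / 2) := by
  set a := ⟪u, v⟫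
  have huu : ⟪u, u⟫ = 1 := by rw [real_inner_self_eq_norm_sq, hu, one_pow]
  have hvv : ⟪v, v⟫ = 1 := by rw [real_inner_self_eq_norm_sq, hv, one_pow]
  -- a point on the bisector of `u` and `v`, at distance `3r/5` from both hyperplanes
  set t := 3 * r / (5 * (1 + a))
  have ht : 0 < t := by positivity
  have hta : t * (1 + a) = 3 / 5 * r := by
    simp only [t]
    field_simp
  have hball : x + t • (u + v) ∈ ball x r := by
    rw [mem_ball, dist_eq_norm, add_sub_cancel_left]
    refine lt_of_pow_lt_pow_left₀ 2 hr.le ?_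
    have hnorm : ‖t • (u + v)‖ ^ 2 = 2 * (t * (1 + a)) * t := by
      rw [norm_smul, mul_pow, norm_add_sq_real, hu, hv, Real.norm_eq_abs, sq_abs]
      ring
    have htr : t ≤ 3 / 5 * r := by rw [← hta]; nlinarith
    rw [hnorm, hta]
    nlinarith
  refine ⟨x + t • (u + v), ⟨hball, ?_⟩, ⟨hball, ?_⟩⟩
  · show r / 2 < ⟪x + t • (u + v) - x, u⟫
    rw [add_sub_cancel_left, real_inner_smul_left, inner_add_left, huu, real_inner_comm u v]
    linarith
  · show r / 2 < ⟪x + t • (u + v) - x, v⟫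
    rw [add_sub_cancel_left, real_inner_smul_left, inner_add_left, hvv]
    linarith

theorem exists_mem_ballCap_inter_ballCap_union {u v : E} (hu : ‖u‖ = 1) (hv : ‖v‖ = 1) (x : E)
    {r : ℝ} (hr : 0 < r) :
    ∃ p ∈ ballCap x v r (r / 2), p ∈ ballCap x u r (r / 2) ∪ ballCap x (-u) r (r / 2) := by
  by_cases huv : 0 ≤ ⟪u, v⟫
  · obtain ⟨p, hpu, hpv⟩ := exists_mem_ballCap_inter_of_inner_nonneg hu hv huv x hr
    exact ⟨p, hpv, Or.inl hpu⟩
  · have hnuv : 0 ≤ ⟪-u, v⟫ := by rw [inner_neg_left]; linarith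
    obtain ⟨p, hpu, hpv⟩ :=
      exists_mem_ballCap_inter_of_inner_nonneg (by rwa [norm_neg]) hv hnuv x hr
    exact ⟨p, hpv, Or.inr hpu⟩

theorem exists_isPreconnected_ballCap_union_subset {K : Set E} {x y ν : E} {r e : ℝ} (hν : ‖ν‖ = 1)
    (hK : ∀ z ∈ K ∩ ball x r, |⟪z - x, ν⟫| ≤ e) (hy : ⟪y - x, ν⟫ = 0) (hyr : y ∈ ball x r)
    (hyK : 2 * e ≤ infDist y K) (he : 0 < e) (her : 2 * e ≤ r) :
    ∃ C, IsPreconnected C ∧ C ⊆ ball x r \ K ∧ ballCap x ν r e ∪ ballCap x (-ν) r e ⊆ C := by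
  have hK' : ∀ z ∈ K ∩ ball x r, |⟪z - x, -ν⟫| ≤ e := by
    simpa only [inner_neg_right, abs_neg] using hK
  obtain ⟨z₁, hz₁, hz₁y⟩ := exists_mem_ballCap_mem_ball hν hy hyr he her
  obtain ⟨z₂, hz₂, hz₂y⟩ := exists_mem_ballCap_mem_ball (ν := -ν) (by rwa [norm_neg])
    (by rw [inner_neg_right, hy, neg_zero]) hyr he her
  set M := ball y (2 * e) ∩ ball x r
  have hMK : M ⊆ ball x r \ K := fun z ⟨hzy, hzx⟩ =>
    ⟨hzx, fun hzK => disjoint_ball_infDist.notMem_of_mem_left (ball_subset_ball hyK hzy) hzK⟩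
  refine ⟨ballCap x ν r e ∪ M ∪ ballCap x (-ν) r e, ?_, ?_, ?_⟩
  · refine IsPreconnected.union z₂ (Or.inr ⟨hz₂y, hz₂.1⟩) hz₂ ?_
      (convex_ballCap x (-ν) r e).isPreconnected
    exact IsPreconnected.union z₁ hz₁ ⟨hz₁y, hz₁.1⟩ (convex_ballCap x ν r e).isPreconnected
      ((convex_ball y _).inter (convex_ball x r)).isPreconnected
  · exact union_subset (union_subset (ballCap_subset_ball_diff hK) hMK)
      (ballCap_subset_ball_diff hK')
  · exact union_subset_union subset_union_left le_rfl

theorem connectedComponentIn_ball_diff_eq_of_mem_ballCap {K : Set E} {x ν p : E} (hν : ‖ν‖ = 1)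
    {r : ℝ} (hr : 0 < r) (hK : ∀ z ∈ K ∩ ball x r, |⟪z - x, ν⟫| ≤ r / 2)
    (hp : p ∈ ballCap x ν r (r / 2)) :
    connectedComponentIn (ball x r \ K) (x + (3 / 4 * r) • ν) =
      connectedComponentIn (ball x r \ K) p :=
  (convex_ballCap x ν r _).isPreconnected.connectedComponentIn_eq_of_mem
    (ballCap_subset_ball_diff hK) (add_smul_mem_ballCap hν (by positivity) (by linarith)
      (by linarith)) hp

end Caps

theorem abs_inner_sub_le_infDist_hplane {N : ℕ} {x ν : Euc N} (hν : ‖ν‖ = 1) (z : Euc N) :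
    |⟪z - x, ν⟫| ≤ infDist z (hplane x ν) := by
  refine (le_infDist ⟨x, by simp [hplane]⟩).2 fun p hp => ?_
  calc |⟪z - x, ν⟫| = |⟪z - p, ν⟫| := by
        rw [← sub_add_sub_cancel z p x, inner_add_left, show ⟪p - x, ν⟫ = 0 from hp, add_zero]
    _ ≤ ‖z - p‖ * ‖ν‖ := abs_real_inner_le_norm _ _
    _ = dist z p := by rw [hν, mul_one, dist_eq_norm]

theorem unilateral_bilateral_flatness_general (N : ℕ) (K : Set (Euc N))
    (x₀ : Euc N) (r₀ : ℝ) (hr₀ : 0 < r₀)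
    (ε : ℝ) (hε : ε ∈ Set.Ioc (0 : ℝ) (1 / 2)) (ν : Euc N) (hν : ‖ν‖ = 1)
    (hstrip : ∀ y ∈ K ∩ ball x₀ r₀, infDist y (hplane x₀ ν) ≤ ε * r₀)
    (hsep : Separates K x₀ r₀) :
    ∀ y ∈ hplane x₀ ν ∩ ball x₀ r₀, infDist y K ≤ 2 * ε * r₀ := by
  obtain ⟨ν', hν', hstrip', -, -, hne⟩ := hsep
  obtain ⟨hε0, hε2⟩ := hε
  rintro y ⟨hyP, hyB⟩
  by_contra! hyK
  have hεr : ε * r₀ ≤ r₀ / 2 := by nlinarith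
  obtain ⟨C, hC, hCS, hCcaps⟩ := exists_isPreconnected_ballCap_union_subset hν
    (fun z hz => (abs_inner_sub_le_infDist_hplane hν z).trans (hstrip z hz)) hyP hyB
    (by linarith) (by positivity) (by linarith)
  have hcapsC := (union_subset_union (ballCap_anti hεr) (ballCap_anti hεr)).trans hCcaps
  have hK' : ∀ z ∈ K ∩ ball x₀ r₀, |⟪z - x₀, ν'⟫| ≤ r₀ / 2 := fun z hz =>
    (abs_inner_sub_le_infDist_hplane hν' z).trans (hstrip' z hz)
  obtain ⟨p, hp', hp⟩ := exists_mem_ballCap_inter_ballCap_union hν hν' x₀ hr₀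
  obtain ⟨q, hq', hq⟩ := exists_mem_ballCap_inter_ballCap_union hν (by rwa [norm_neg]) x₀ hr₀
  refine hne ?_
  calc posCompo K x₀ r₀ ν' = connectedComponentIn (ball x₀ r₀ \ K) p :=
        connectedComponentIn_ball_diff_eq_of_mem_ballCap hν' hr₀ hK' hp'
    _ = connectedComponentIn (ball x₀ r₀ \ K) q := hC.connectedComponentIn_eq_of_mem hCS
        (hcapsC hp) (hcapsC hq)
    _ = negCompo K x₀ r₀ ν' := by
        rw [negCompo, sub_eq_add_neg, ← smul_neg]
        refine (connectedComponentIn_ball_diff_eq_of_mem_ballCap (by rwa [norm_neg]) hr₀ ?_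
          hq').symm
        simpa only [inner_neg_right, abs_neg] using hK'

/-- Equivalence of unilateral and bilateral flatness for separating sets: if
`K ∩ B(x₀,r₀)` lies in the strip of half-width `ε r₀` around a hyperplane `P` through `x₀`
and `K` separates in `B(x₀,r₀)`, then every point of `P ∩ B(x₀,r₀)` is at distance at most
`2 ε r₀` from `K`. -/
theorem unilateral_bilateral_flatness (N : ℕ) (hN : 2 ≤ N)
    (Ω : Set (Euc N)) (hΩ : IsOpen Ω) (K : Set (Euc N)) (hK : RelClosedIn K Ω)
    (x₀ : Euc N) (hx₀ : x₀ ∈ K) (r₀ : ℝ) (hr₀ : 0 < r₀) (hB : ball x₀ r₀ ⊆ Ω)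
    (ε : ℝ) (hε : ε ∈ Set.Ioc (0 : ℝ) (1 / 2)) (ν : Euc N) (hν : ‖ν‖ = 1)
    (hstrip : ∀ y ∈ K ∩ ball x₀ r₀, infDist y (hplane x₀ ν) ≤ ε * r₀)
    (hsep : Separates K x₀ r₀) :
    ∀ y ∈ hplane x₀ ν ∩ ball x₀ r₀, infDist y K ≤ 2 * ε * r₀ :=
  unilateral_bilateral_flatness_general N K x₀ r₀ hr₀ ε hε ν hν hstrip hsep
end

section
/- Partition-of-unity lemma: let V ⊆ ℝ^N be open and let (B_i)_{i∈I} be a family of open balls B_i = B(y_i, r_i), r_i > 0, such that the family (B(y_i, 10 r_i))_i is locally finite in V, every point of ℝ^N belongs to at most C₀ of the balls B(y_i, 10 r_i), and whenever B(y_i, 10 r_i) ∩ B(y_k, 10 r_k) ≠ ∅ one has r_k/2 ≤ r_i ≤ 2 r_k. For each i let φ_i be a smooth function with 0 ≤ φ_i ≤ 1, φ_i = 1 on B(y_i, 9 r_i), compact support contained in B(y_i, 10 r_i), and Lipschitz constant at most 2 r_i⁻¹. Then the function φ₀ := ∏_i (1 − φ_i) is well defined and smooth on V, satisfies 0 ≤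 φ₀ ≤ 1, φ₀ = 1 on V \ ⋃_i supp(φ_i), φ₀ = 0 on ⋃_i B(y_i, 9 r_i) (hence { x ∈ V : φ₀(x) ≠ 0 } ⊆ V \ ⋃_i B(y_i, 9 r_i)), φ₀ + Σ_i φ_i ≥ 1 on V, and there is a constant C ≥ 1 depending only on N and C₀ such that for every k and every x ∈ B(y_k, 10 r_k): |∇φ₀(x)| + Σ_i |∇φ_i(x)| ≤ C r_k⁻¹. -/
open Metric MeasureTheory Set Filter
open scoped RealInnerProductSpace ENNReal NNReal Topology

open Metric Set Function Filter in
lemma prod_one_sub_mem_Icc {I : Type*} (s : Finset I) (a : I → ℝ)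
    (ha : ∀ i, a i ∈ Set.Icc (0:ℝ) 1) : (∏ i ∈ s, (1 - a i)) ∈ Set.Icc (0:ℝ) 1 :=
  ⟨Finset.prod_nonneg fun i _ => by linarith [(ha i).2],
   Finset.prod_le_one (fun i _ => by linarith [(ha i).2]) (fun i _ => by linarith [(ha i).1])⟩

lemma one_le_prod_add_sum {I : Type*} (s : Finset I) (a : I → ℝ)
    (ha : ∀ i, a i ∈ Set.Icc (0:ℝ) 1) :
    1 ≤ (∏ i ∈ s, (1 - a i)) + ∑ i ∈ s, a i := by
  classical
  induction s using Finset.induction with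
  | empty => simp
  | @insert j t hj ih =>
    rw [Finset.prod_insert hj, Finset.sum_insert hj]
    have hP := prod_one_sub_mem_Icc t a ha
    nlinarith [(ha j).1, (ha j).2, hP.1, hP.2]

lemma differentiable_finset_prod {E : Type*} [NormedAddCommGroup E] [NormedSpace ℝ E]
    {I : Type*} (s : Finset I) (g : I → E → ℝ)
    (hd : ∀ i, Differentiable ℝ (g i)) : Differentiable ℝ (fun z => ∏ i ∈ s, g i z) := by
  classical
  induction s using Finset.induction with
  | empty => simp
  | @insert j t hj ih =>
    simp only [Finset.prod_insert hj]
    exact (hd j).mul ih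

lemma norm_fderiv_prod_le {E : Type*} [NormedAddCommGroup E] [NormedSpace ℝ E]
    {I : Type*} (s : Finset I) (g : I → E → ℝ) (x : E)
    (hd : ∀ i, Differentiable ℝ (g i))
    (hb : ∀ i z, |g i z| ≤ 1) :
    ‖fderiv ℝ (fun z => ∏ i ∈ s, g i z) x‖ ≤ ∑ i ∈ s, ‖fderiv ℝ (g i) x‖ := by
  classical
  induction s using Finset.induction with
  | empty => simp
  | @insert j t hj ih =>
    have hdP : DifferentiableAt ℝ (fun z => ∏ i ∈ t, g i z) x :=
      (differentiable_finset_prod t g hd).differentiableAt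
    have key : (fun z => ∏ i ∈ insert j t, g i z) = fun z => g j z * ∏ i ∈ t, g i z := by
      funext z; rw [Finset.prod_insert hj]
    rw [key, fderiv_fun_mul ((hd j).differentiableAt) hdP, Finset.sum_insert hj]
    have h1 : |∏ i ∈ t, g i x| ≤ 1 := by
      rw [Finset.abs_prod]
      exact Finset.prod_le_one (fun i _ => abs_nonneg _) (fun i _ => hb i x)
    calc ‖g j x • fderiv ℝ (fun z => ∏ i ∈ t, g i z) x + (∏ i ∈ t, g i x) • fderiv ℝ (g j) x‖
        ≤ ‖g j x • fderiv ℝ (fun z => ∏ i ∈ t, g i z) x‖ + ‖(∏ i ∈ t, g i x) • fderiv ℝ (g j) x‖ :=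
          norm_add_le _ _
      _ ≤ ‖fderiv ℝ (fun z => ∏ i ∈ t, g i z) x‖ + ‖fderiv ℝ (g j) x‖ := by
          rw [norm_smul, norm_smul, Real.norm_eq_abs, Real.norm_eq_abs]
          gcongr
          · calc |g j x| * ‖fderiv ℝ (fun z => ∏ i ∈ t, g i z) x‖
                ≤ 1 * ‖fderiv ℝ (fun z => ∏ i ∈ t, g i z) x‖ := by gcongr; exact hb j x
              _ = _ := one_mul _
          · calc |∏ i ∈ t, g i x| * ‖fderiv ℝ (g j) x‖ ≤ 1 * ‖fderiv ℝ (g j) x‖ := by gcongr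
              _ = _ := one_mul _
      _ ≤ ‖fderiv ℝ (g j) x‖ + ∑ i ∈ t, ‖fderiv ℝ (g i) x‖ := by
          rw [add_comm]; gcongr


/-- Partition-of-unity lemma. -/
theorem partition_of_unity_lemma (N : ℕ) (hN : 2 ≤ N) (C₀ : ℕ) :
    ∃ C : ℝ, 1 ≤ C ∧
      ∀ (V : Set (Euc N)), IsOpen V →
      ∀ (I : Type) (y : I → Euc N) (r : I → ℝ), (∀ i, 0 < r i) →
        (∀ x ∈ V, ∃ t ∈ 𝓝 x, {i | (ball (y i) (10 * r i) ∩ t).Nonempty}.Finite) →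
        (∀ x : Euc N, {i | x ∈ ball (y i) (10 * r i)}.Finite ∧
          {i | x ∈ ball (y i) (10 * r i)}.ncard ≤ C₀) →
        (∀ i k, (ball (y i) (10 * r i) ∩ ball (y k) (10 * r k)).Nonempty →
          r k / 2 ≤ r i ∧ r i ≤ 2 * r k) →
      ∀ φ : I → Euc N → ℝ,
        (∀ i, ContDiff ℝ (⊤ : ℕ∞) (φ i)) →
        (∀ i x, φ i x ∈ Set.Icc (0 : ℝ) 1) →
        (∀ i, Set.EqOn (φ i) 1 (ball (y i) (9 * r i))) →
        (∀ i, HasCompactSupport (φ i) ∧ tsupport (φ i) ⊆ ball (y i) (10 * r i)) →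
        (∀ i, LipschitzWith (Real.toNNReal (2 / r i)) (φ i)) →
      ∀ φ₀ : Euc N → ℝ, φ₀ = (fun x => ∏ᶠ i, (1 - φ i x)) →
        ContDiffOn ℝ (⊤ : ℕ∞) φ₀ V ∧
        (∀ x ∈ V, φ₀ x ∈ Set.Icc (0 : ℝ) 1) ∧
        (∀ x ∈ V \ ⋃ i, tsupport (φ i), φ₀ x = 1) ∧
        (∀ x ∈ V ∩ ⋃ i, ball (y i) (9 * r i), φ₀ x = 0) ∧
        (∀ x ∈ V, 1 ≤ φ₀ x + ∑ᶠ i, φ i x) ∧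
        (∀ k, ∀ x ∈ V ∩ ball (y k) (10 * r k),
          ‖fderiv ℝ φ₀ x‖ + ∑ᶠ i, ‖fderiv ℝ (φ i) x‖ ≤ C / r k) := by
  classical
  refine ⟨8 * C₀ + 1, le_add_of_nonneg_left (by positivity), ?_⟩
  intro V hV I y r hr hlf hC₀ hcomp φ hsm h01 h9 hsupp hlip φ₀ hφ₀def
  subst hφ₀def
  have hSfin : ∀ x : Euc N, {i | x ∈ ball (y i) (10 * r i)}.Finite := fun x => (hC₀ x).1
  set G : Euc N → Finset I := fun x => (hSfin x).toFinset with hG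
  have hmemG : ∀ x i, i ∈ G x ↔ x ∈ ball (y i) (10 * r i) := fun x i =>
    (hSfin x).mem_toFinset
  have hsub : ∀ (x : Euc N) i, φ i x ≠ 0 → x ∈ ball (y i) (10 * r i) := fun x i h =>
    (hsupp i).2 (subset_tsupport _ h)
  have hmul : ∀ x : Euc N, Function.mulSupport (fun i => 1 - φ i x) ⊆ ↑(G x) := by
    intro x i hi
    have hφ : φ i x ≠ 0 := fun h => hi (by simp [Function.mem_mulSupport, h])
    simpa [hmemG] using hsub x i hφ
  have hprod : ∀ x : Euc N, (∏ᶠ i, (1 - φ i x)) = ∏ i ∈ G x, (1 - φ i x) := fun x =>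
    finprod_eq_finset_prod_of_mulSupport_subset _ (hmul x)
  have hGcard : ∀ x : Euc N, (G x).card ≤ C₀ := by
    intro x
    have := (hC₀ x).2
    rwa [Set.ncard_eq_toFinset_card _ (hSfin x)] at this
  -- local representation near points of V
  have hloc : ∀ x ∈ V, ∃ F : Finset I,
      (fun z => ∏ i ∈ F, (1 - φ i z)) =ᶠ[𝓝 x] (fun z => ∏ᶠ i, (1 - φ i z)) := by
    intro x hx
    obtain ⟨t, ht, hfin⟩ := hlf x hx
    refine ⟨hfin.toFinset, ?_⟩
    filter_upwards [ht] with z hz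
    refine (finprod_eq_finset_prod_of_mulSupport_subset _ ?_).symm
    intro i hi
    have hφ : φ i z ≠ 0 := fun h => hi (by simp [Function.mem_mulSupport, h])
    have : (ball (y i) (10 * r i) ∩ t).Nonempty := ⟨z, hsub z i hφ, hz⟩
    simpa [hfin.mem_toFinset] using this
  refine ⟨?_, ?_, ?_, ?_, ?_, ?_⟩
  · -- smoothness
    intro x hx
    obtain ⟨F, hF⟩ := hloc x hx
    have hsmF : ContDiffAt ℝ (⊤ : ℕ∞) (fun z => ∏ i ∈ F, (1 - φ i z)) x :=
      contDiffAt_prod fun i _ => (contDiff_const.sub (hsm i)).contDiffAt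
    exact (hsmF.congr_of_eventuallyEq hF.symm).contDiffWithinAt
  · intro x hx
    simp only [hprod x]
    exact prod_one_sub_mem_Icc _ _ fun i => h01 i x
  · intro x hx
    refine finprod_eq_one_of_forall_eq_one fun i => ?_
    have : φ i x = 0 := by
      by_contra h
      exact hx.2 (Set.mem_iUnion.2 ⟨i, subset_tsupport _ h⟩)
    simp [this]
  · intro x hx
    obtain ⟨_, hU⟩ := hx
    obtain ⟨k, hk⟩ := Set.mem_iUnion.1 hU
    have hk1 : φ k x = 1 := h9 k hk
    have hkG : k ∈ G x := by
      rw [hmemG]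
      exact ball_subset_ball (by nlinarith [hr k]) hk
    simp only [hprod x]
    exact Finset.prod_eq_zero hkG (by simp [hk1])
  · intro x hx
    have hsum : (∑ᶠ i, φ i x) = ∑ i ∈ G x, φ i x :=
      finsum_eq_finset_sum_of_support_subset _ (by
        intro i hi
        simpa [hmemG] using hsub x i hi)
    simp only [hprod x, hsum]
    exact one_le_prod_add_sum _ _ fun i => h01 i x
  · -- gradient bound
    intro k x hx
    obtain ⟨hxV, hxB⟩ := hx
    have h0 : ∀ i, x ∉ ball (y i) (10 * r i) → fderiv ℝ (φ i) x = 0 := by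
      intro i hi
      by_contra h
      exact hi ((hsupp i).2 (support_fderiv_subset ℝ h))
    have hbd : ∀ i, x ∈ ball (y i) (10 * r i) → ‖fderiv ℝ (φ i) x‖ ≤ 4 / r k := by
      intro i hi
      have h1 : ‖fderiv ℝ (φ i) x‖ ≤ 2 / r i := by
        have := norm_fderiv_le_of_lipschitz ℝ (hlip i) (x₀ := x)
        rwa [Real.coe_toNNReal _ (le_of_lt (div_pos two_pos (hr i)))] at this
      have h2 : r k / 2 ≤ r i := (hcomp i k ⟨x, hi, hxB⟩).1
      have hrk := hr k
      calc ‖fderiv ℝ (φ i) x‖ ≤ 2 / r i := h1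
        _ ≤ 2 / (r k / 2) := div_le_div_of_nonneg_left (by norm_num) (by linarith) h2
        _ = 4 / r k := by field_simp; ring
    have hGsum : ∑ i ∈ G x, ‖fderiv ℝ (φ i) x‖ ≤ (C₀ : ℝ) * (4 / r k) := by
      calc ∑ i ∈ G x, ‖fderiv ℝ (φ i) x‖ ≤ (G x).card • (4 / r k) :=
            Finset.sum_le_card_nsmul _ _ _ fun i hi => hbd i ((hmemG x i).1 hi)
        _ = ((G x).card : ℝ) * (4 / r k) := nsmul_eq_mul _ _
        _ ≤ (C₀ : ℝ) * (4 / r k) :=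
            mul_le_mul_of_nonneg_right (by exact_mod_cast hGcard x)
              (le_of_lt (div_pos (by norm_num) (hr k)))
    have hfsum : (∑ᶠ i, ‖fderiv ℝ (φ i) x‖) = ∑ i ∈ G x, ‖fderiv ℝ (φ i) x‖ :=
      finsum_eq_finset_sum_of_support_subset _ (by
        intro i hi
        have : fderiv ℝ (φ i) x ≠ 0 := fun h => hi (by simp [Function.mem_support, h])
        rw [hG]
        simp only [Finset.coe_sort_coe, Set.Finite.coe_toFinset, Set.mem_setOf_eq]
        by_contra hc
        exact this (h0 i hc))
    -- bound on fderiv of φ₀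
    obtain ⟨F, hF⟩ := hloc x hxV
    have hfd0 : fderiv ℝ (fun z => ∏ᶠ i, (1 - φ i z)) x
        = fderiv ℝ (fun z => ∏ i ∈ F, (1 - φ i z)) x := (hF.fderiv_eq).symm
    have hgd : ∀ i, Differentiable ℝ (fun z => 1 - φ i z) :=
      fun i => (contDiff_const.sub (hsm i)).differentiable (by simp)
    have hgb : ∀ (i : I) (z : Euc N), |1 - φ i z| ≤ 1 := by
      intro i z
      have := h01 i z
      rw [abs_le]; constructor <;> [linarith [this.2]; linarith [this.1]]
    have hF1 : ‖fderiv ℝ (fun z => ∏ i ∈ F, (1 - φ i z)) x‖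
        ≤ ∑ i ∈ F, ‖fderiv ℝ (fun z => 1 - φ i z) x‖ :=
      norm_fderiv_prod_le F (fun i z => 1 - φ i z) x hgd hgb
    have hF2 : ∑ i ∈ F, ‖fderiv ℝ (fun z => 1 - φ i z) x‖ = ∑ i ∈ F, ‖fderiv ℝ (φ i) x‖ := by
      refine Finset.sum_congr rfl fun i _ => ?_
      rw [fderiv_const_sub, norm_neg]
    have hF3 : ∑ i ∈ F, ‖fderiv ℝ (φ i) x‖ ≤ ∑ i ∈ G x, ‖fderiv ℝ (φ i) x‖ := by
      have he : ∑ i ∈ F ∩ G x, ‖fderiv ℝ (φ i) x‖ = ∑ i ∈ F, ‖fderiv ℝ (φ i) x‖ := by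
        refine Finset.sum_subset Finset.inter_subset_left fun i hiF hiN => ?_
        have hiG : i ∉ G x := fun h => hiN (Finset.mem_inter.2 ⟨hiF, h⟩)
        have : x ∉ ball (y i) (10 * r i) := fun h => hiG ((hmemG x i).2 h)
        simp [h0 i this]
      rw [← he]
      exact Finset.sum_le_sum_of_subset_of_nonneg Finset.inter_subset_right
        fun _ _ _ => norm_nonneg _
    have hrk := hr k
    calc ‖fderiv ℝ (fun z => ∏ᶠ i, (1 - φ i z)) x‖ + ∑ᶠ i, ‖fderiv ℝ (φ i) x‖
        ≤ (C₀ : ℝ) * (4 / r k) + (C₀ : ℝ) * (4 / r k) := by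
          rw [hfd0, hfsum]
          exact add_le_add (hF1.trans ((hF2.le.trans hF3).trans hGsum)) hGsum
      _ = 8 * (C₀ : ℝ) / r k := by ring
      _ ≤ (8 * (C₀ : ℝ) + 1) / r k := (div_le_div_iff_of_pos_right hrk).mpr (by linarith)
end
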